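/- Let d ∈ ℕ, λ = (λ_1, ..., λ_d) ∈ (0,∞)^d, κ = min{λ_1,...,λ_d}, K = max{λ_1,...,λ_d}, let L : ℝ^d → ℝ satisfy L(θ) = (1/2)Σ_{i=1}^d λ_i |θ_i|² for all θ ∈ ℝ^d, let α, β ∈ (0,1) and γ, ε ∈ (0,∞) satisfy α = ((1 − γε^{−1}κ)/(1 + γε^{−1}κ))² and γ ≤ ε/sqrt(κK), let Θ, m, 𝕄 : ℕ_0 → ℝ^d satisfy for all n ∈ ℕ: m_n = α m_{n−1} + (1−α)(∇L)(Θ_{n−1}), 𝕄_n = β 𝕄_{n−1} + (1−β)[(∇L)(Θ_{n−1})]^{⊙2}, and Θ_n = Θ_{n−1} − γ(1−α^n)^{−1} (ε𝟙_d + (1−β^n)^{−1/2}(𝕄_n)^{⊙1/2})^{⊙(−1)} ⊙ m_n, and assume lim_{n→∞} ‖𝕄_n‖ = 0. Then for every δ > 0 there exists C > 0 such that for all n ∈ ℕ_0 it holds that ‖Θ_n‖ ≤ C · (sqrt(α) + δ)^n. -/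

import Mathlib

open Filter

noncomputable section

/-- Componentwise (Hadamard) product of two vectors. -/
def had {d : ℕ} (x y : EuclideanSpace ℝ (Fin d)) : EuclideanSpace ℝ (Fin d) :=
  WithLp.toLp 2 (fun i => x i * y i)

/-- Componentwise square. -/
def sq2 {d : ℕ} (x : EuclideanSpace ℝ (Fin d)) : EuclideanSpace ℝ (Fin d) :=
  WithLp.toLp 2 (fun i => (x i) ^ 2)

/-- The vector `(ε𝟙_d + b • x^{⊙1/2})^{⊙(-1)}`, i.e. componentwise `(ε + b·√(x i))⁻¹`. -/
def regInvSqrt {d : ℕ} (ε b : ℝ) (x : EuclideanSpace ℝ (Fin d)) :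
    EuclideanSpace ℝ (Fin d) :=
  WithLp.toLp 2 (fun i => (ε + b * Real.sqrt (x i))⁻¹)

/-!
Fix a coordinate `i` and write `l = λ_i`. The pair `(m_n i, Θ_n i)` evolves by a `2 × 2` linear
map `B_n` depending on the effective step size `c_n`, and since `𝕄_n → 0` the bias corrections
disappear and `c_n → γ/ε`. The limit map `A` satisfies `A² = τ A - α` with `τ` its trace, and the
step-size condition `γ ≤ ε/√(κK)` together with the choice of `α` gives `τ² ≤ 4α`: both
eigenvalues of `A` have modulus `√α`. Writing the powers of `A` through the Lucas sequence of
`x² - τx + α` bounds `‖Aⁿ‖` by a multiple of `n √αⁿ`, hence by `C rⁿ` for every `r > √α`.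
A perturbation argument (variation of constants plus induction) transfers this bound to the
products of the `B_n` at the cost of an arbitrarily small increase of `r`.
-/

open Topology Asymptotics

def lucasU (P Q : ℝ) : ℕ → ℝ
  | 0 => 0
  | 1 => 1
  | n + 2 => P * lucasU P Q (n + 1) - Q * lucasU P Q n

namespace lucasU

variable {P Q : ℝ}

theorem sq_sub_mul_add_mul_sq (n : ℕ) :
    lucasU P Q (n + 1) ^ 2 - P * lucasU P Q (n + 1) * lucasU P Q n + Q * lucasU P Q n ^ 2 =
      Q ^ n := by
  induction n with
  | zero => simp [lucasU]
  | succ n ih =>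
    rw [lucasU, pow_succ]
    linear_combination Q * ih

theorem abs_succ_le (hPQ : P ^ 2 ≤ 4 * Q) (n : ℕ) :
    |lucasU P Q (n + 1)| ≤ √Q * |lucasU P Q n| + √Q ^ n := by
  have hQ : 0 ≤ Q := by nlinarith
  -- the invariant reads `(U (n+1) - P/2 U n)² + (Q - P²/4) U n² = Q ^ n`
  have hdev : |lucasU P Q (n + 1) - P / 2 * lucasU P Q n| ≤ √Q ^ n := by
    refine abs_le_of_sq_le_sq ?_ (by positivity)
    rw [← pow_mul, mul_comm n 2, pow_mul, Real.sq_sqrt hQ]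
    nlinarith [sq_sub_mul_add_mul_sq (P := P) (Q := Q) n,
      mul_nonneg (sub_nonneg.2 hPQ) (sq_nonneg (lucasU P Q n))]
  have hP : |P / 2| ≤ √Q := Real.abs_le_sqrt (by linarith)
  calc |lucasU P Q (n + 1)|
      ≤ |P / 2| * |lucasU P Q n| + |lucasU P Q (n + 1) - P / 2 * lucasU P Q n| := by
        rw [← abs_mul]
        linarith [abs_sub_abs_le_abs_sub (lucasU P Q (n + 1)) (P / 2 * lucasU P Q n)]
    _ ≤ √Q * |lucasU P Q n| + √Q ^ n := by gcongr

theorem sqrt_mul_abs_le (hPQ : P ^ 2 ≤ 4 * Q) (n : ℕ) :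
    √Q * |lucasU P Q n| ≤ n * √Q ^ n := by
  induction n with
  | zero => simp [lucasU]
  | succ n ih =>
    calc √Q * |lucasU P Q (n + 1)| ≤ √Q * (√Q * |lucasU P Q n| + √Q ^ n) := by
          gcongr; exact abs_succ_le hPQ n
      _ ≤ √Q * (n * √Q ^ n) + √Q ^ (n + 1) := by rw [mul_add, pow_succ']; gcongr
      _ = (n + 1 : ℕ) * √Q ^ (n + 1) := by push_cast; ring

theorem pow_succ_eq {A : Type*} [Ring A] [Algebra ℝ A] {a : A} (ha : a * a = P • a - Q • 1)
    (n : ℕ) : a ^ (n + 1) = lucasU P Q (n + 1) • a - (Q * lucasU P Q n) • 1 := by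
  induction n with
  | zero => simp [lucasU]
  | succ n ih =>
    rw [pow_succ, ih, sub_mul, smul_mul_assoc, smul_mul_assoc, ha, one_mul, lucasU]
    module

end lucasU

theorem isBigO_pow_of_mul_self_eq {A : Type*} [NormedRing A] [NormedAlgebra ℝ A] {a : A}
    {P Q r : ℝ} (ha : a * a = P • a - Q • 1) (hPQ : P ^ 2 ≤ 4 * Q) (hQ : 0 < Q) (hr : √Q < r) :
    (fun n => a ^ n) =O[atTop] fun n => r ^ n := by
  set ρ := √Q
  have hρ : 0 < ρ := Real.sqrt_pos.2 hQ
  have hρQ : ρ * ρ = Q := Real.mul_self_sqrt hQ.le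
  have hbound (n : ℕ) :
      ‖a ^ (n + 1)‖ ≤ (‖a‖ + ρ * ‖(1 : A)‖) / ρ * ((n + 1 : ℕ) * ρ ^ (n + 1)) := by
    have hU := lucasU.sqrt_mul_abs_le hPQ
    set U := lucasU P Q
    rw [lucasU.pow_succ_eq ha, div_mul_eq_mul_div, le_div_iff₀ hρ]
    calc ‖U (n + 1) • a - (Q * U n) • (1 : A)‖ * ρ
        ≤ (|U (n + 1)| * ‖a‖ + Q * |U n| * ‖(1 : A)‖) * ρ := by
          gcongr
          grw [norm_sub_le, norm_smul, norm_smul, Real.norm_eq_abs, Real.norm_eq_abs, abs_mul,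
            abs_of_pos hQ]
      _ = (ρ * |U (n + 1)|) * ‖a‖ + ρ * ρ * (ρ * |U n|) * ‖(1 : A)‖ := by
          linear_combination (-(|U n| * ‖(1 : A)‖ * ρ)) * hρQ
      _ ≤ ((n + 1 : ℕ) * ρ ^ (n + 1)) * ‖a‖ + ρ * ρ * (n * ρ ^ n) * ‖(1 : A)‖ := by
          gcongr ?_ * _ + _ * ?_ * _
          exacts [hU (n + 1), hU n]
      _ ≤ (‖a‖ + ρ * ‖(1 : A)‖) * ((n + 1 : ℕ) * ρ ^ (n + 1)) := by
          rw [pow_succ]; push_cast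
          nlinarith [mul_nonneg (norm_nonneg (1 : A)) (pow_pos hρ n).le]
  have hlin : (fun n => a ^ n) =O[atTop] fun n : ℕ => (n : ℝ) ^ 1 * ρ ^ n := by
    refine IsBigO.of_bound ((‖a‖ + ρ * ‖(1 : A)‖) / ρ) (eventually_atTop.2 ⟨1, fun n hn => ?_⟩)
    obtain ⟨k, rfl⟩ := Nat.exists_eq_add_of_le' hn
    simpa [abs_of_pos hρ, abs_of_nonneg (by positivity : (0 : ℝ) ≤ k + 1)] using hbound k
  exact hlin.trans (isLittleO_pow_const_mul_const_pow_const_pow_of_norm_lt 1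
    (by rwa [Real.norm_of_nonneg hρ.le])).isBigO

section Perturbation

variable {𝕜 E : Type*} [NontriviallyNormedField 𝕜] [NormedAddCommGroup E] [NormedSpace 𝕜 E]
  {A : E →L[𝕜] E} {v w : ℕ → E}

theorem eq_pow_apply_add_sum_of_succ_eq (hv : ∀ n, v (n + 1) = A (v n) + w n) (n : ℕ) :
    v n = (A ^ n) (v 0) + ∑ k ∈ Finset.range n, (A ^ (n - 1 - k)) (w k) := by
  induction n with
  | zero => simp
  | succ n ih =>
    rw [hv, ih, map_add, map_sum, Finset.sum_range_succ, Nat.add_sub_cancel, Nat.sub_self,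
      pow_zero, one_apply_eq_self, ← mul_apply_eq_comp, ← pow_succ',
      add_assoc]
    congr 2
    refine Finset.sum_congr rfl fun k hk => ?_
    rw [← mul_apply_eq_comp, ← pow_succ',
      show n - 1 - k + 1 = n - k by have := Finset.mem_range.1 hk; omega]

theorem norm_le_of_succ_eq_add {C r η : ℝ} (hv : ∀ n, v (n + 1) = A (v n) + w n)
    (hr : 0 ≤ r) (hη : 0 ≤ η) (hA : ∀ j, ‖A ^ j‖ ≤ C * r ^ j) (hw : ∀ n, ‖w n‖ ≤ η * ‖v n‖)
    (n : ℕ) : ‖v n‖ ≤ C * ‖v 0‖ * (r + C * η) ^ n := by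
  have hC : 0 ≤ C := by simpa using (norm_nonneg _).trans (hA 0)
  have hAx (j : ℕ) (x : E) : ‖(A ^ j) x‖ ≤ C * r ^ j * ‖x‖ :=
    ((A ^ j).le_opNorm x).trans (by gcongr; exact hA j)
  set s := r + C * η
  induction n using Nat.strong_induction_on with
  | _ n ih =>
  calc ‖v n‖ ≤ ‖(A ^ n) (v 0)‖ + ∑ k ∈ Finset.range n, ‖(A ^ (n - 1 - k)) (w k)‖ := by
        rw [eq_pow_apply_add_sum_of_succ_eq hv n]
        exact (norm_add_le _ _).trans (by gcongr; exact norm_sum_le _ _)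
    _ ≤ C * r ^ n * ‖v 0‖ +
          ∑ k ∈ Finset.range n, C * r ^ (n - 1 - k) * (η * (C * ‖v 0‖ * s ^ k)) := by
        gcongr with k hk
        · exact hAx n _
        · refine (hAx _ _).trans ?_
          gcongr
          exact (hw k).trans (by gcongr; exact ih k (Finset.mem_range.1 hk))
    _ = C * ‖v 0‖ * (r ^ n + (∑ k ∈ Finset.range n, s ^ k * r ^ (n - 1 - k)) * (s - r)) := by
        rw [show s - r = C * η by simp [s], Finset.sum_mul, mul_add, Finset.mul_sum]
        congr 1
        · ring
        · exact Finset.sum_congr rfl fun k _ => by ring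
    _ = C * ‖v 0‖ * s ^ n := by rw [geom_sum₂_mul]; ring

theorem isBigO_of_succ_eq_of_tendsto {B : ℕ → E →L[𝕜] E} {r r' : ℝ}
    (hv : ∀ n, v (n + 1) = B n (v n)) (hB : Tendsto B atTop (𝓝 A)) (hr : 0 < r) (hrr' : r < r')
    (hA : (fun n => A ^ n) =O[atTop] fun n => r ^ n) : v =O[atTop] fun n => r' ^ n := by
  obtain ⟨C, hC, hAC⟩ := bound_of_isBigO_nat_atTop hA
  have hpow (j : ℕ) : ‖A ^ j‖ ≤ C * r ^ j := by
    simpa [abs_of_pos hr] using hAC (pow_ne_zero j hr.ne')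
  set η := (r' - r) / C
  have hη : 0 < η := div_pos (sub_pos.2 hrr') hC
  obtain ⟨N, hN⟩ := eventually_atTop.1 <|
    (tendsto_iff_norm_sub_tendsto_zero.1 hB).eventually_lt_const hη
  have hshift (k : ℕ) : ‖v (N + k)‖ ≤ C * ‖v N‖ * r' ^ k := by
    have hr' : r + C * η = r' := by rw [mul_div_cancel₀ _ hC.ne']; ring
    rw [← hr']
    refine norm_le_of_succ_eq_add (v := fun k => v (N + k))
      (w := fun k => (B (N + k) - A) (v (N + k))) (fun k => ?_) hr.le hη.le hpow (fun k => ?_) k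
    · simp [← add_assoc, hv]
    · exact ((B (N + k) - A).le_opNorm _).trans (by gcongr; exact (hN _ (by omega)).le)
  refine IsBigO.of_bound (C * ‖v N‖ / r' ^ N) (eventually_atTop.2 ⟨N, fun n hn => ?_⟩)
  obtain ⟨k, rfl⟩ := Nat.exists_eq_add_of_le hn
  have hr'0 : 0 < r' := hr.trans hrr'
  rw [Real.norm_of_nonneg (by positivity), pow_add]
  calc ‖v (N + k)‖ ≤ C * ‖v N‖ * r' ^ k := hshift k
    _ = C * ‖v N‖ / r' ^ N * (r' ^ N * r' ^ k) := by field_simp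

end Perturbation

/-- One Adam step on a coordinate pair `(m, θ)` for the objective `l θ² / 2` with effective step
size `c`: first `m ← α m + (1 - α) l θ`, then `θ ← θ - c m`. -/
def adamStep (α l c : ℝ) : ℝ × ℝ →L[ℝ] ℝ × ℝ :=
  let mom := α • ContinuousLinearMap.fst ℝ ℝ ℝ + ((1 - α) * l) • ContinuousLinearMap.snd ℝ ℝ ℝ
  mom.prod (ContinuousLinearMap.snd ℝ ℝ ℝ - c • mom)

@[simp]
theorem adamStep_apply (α l c : ℝ) (x : ℝ × ℝ) :
    adamStep α l c x =
      (α * x.1 + (1 - α) * l * x.2, x.2 - c * (α * x.1 + (1 - α) * l * x.2)) := by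
  simp [adamStep]; ring

theorem adamStep_mul_self (α l c : ℝ) :
    adamStep α l c * adamStep α l c = (1 + α - c * (1 - α) * l) • adamStep α l c - α • 1 := by
  ext <;> simp <;> ring

theorem continuous_adamStep (α l : ℝ) : Continuous (adamStep α l) :=
  (ContinuousLinearMap.prodₗᵢ ℝ).continuous.comp (continuous_const.prodMk (by fun_prop))

theorem sq_trace_adamStep_le {α c κ l : ℝ} (hc : 0 ≤ c) (hκ : 0 ≤ κ) (hκl : κ ≤ l)
    (hcl : c ^ 2 * (κ * l) ≤ 1) (hα : α = ((1 - c * κ) / (1 + c * κ)) ^ 2) :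
    (1 + α - c * (1 - α) * l) ^ 2 ≤ 4 * α := by
  have hu : 0 < 1 + c * κ := by positivity
  have hu₁ : c * κ ≤ 1 := by
    nlinarith [mul_le_mul_of_nonneg_left hκl (by positivity : 0 ≤ c ^ 2 * κ), mul_nonneg hc hκ]
  set w := (1 - c * κ) / (1 + c * κ)
  have hw₀ : 0 ≤ w := div_nonneg (by linarith) hu.le
  have hw₁ : 1 - w = 2 * (c * κ) / (1 + c * κ) := by
    rw [eq_div_iff hu.ne']; simp only [w]; field_simp; ring
  have hw₂ : 1 + w = 2 / (1 + c * κ) := by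
    rw [eq_div_iff hu.ne']; simp only [w]; field_simp; ring
  subst hα
  rw [show 4 * w ^ 2 = (2 * w) ^ 2 by ring]
  refine sq_le_sq' ?_ ?_
  · have h : 1 + w ^ 2 - c * (1 - w ^ 2) * l + 2 * w =
        (1 + w) * (2 * (1 - c ^ 2 * κ * l) / (1 + c * κ)) := by
      rw [show 1 + w ^ 2 - c * (1 - w ^ 2) * l + 2 * w = (1 + w) * ((1 + w) - c * l * (1 - w)) by
        ring, hw₁, hw₂]
      field_simp
    have : 0 ≤ (1 + w) * (2 * (1 - c ^ 2 * κ * l) / (1 + c * κ)) := by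
      apply mul_nonneg (by linarith); apply div_nonneg (by linarith) hu.le
    linarith
  · have h : 2 * w - (1 + w ^ 2 - c * (1 - w ^ 2) * l) =
        (1 - w) * (2 * c * (l - κ) / (1 + c * κ)) := by
      rw [show 2 * w - (1 + w ^ 2 - c * (1 - w ^ 2) * l) = (1 - w) * (c * l * (1 + w) - (1 - w)) by
        ring, hw₁, hw₂]
      field_simp
    have : 0 ≤ (1 - w) * (2 * c * (l - κ) / (1 + c * κ)) := by
      rw [hw₁]; apply mul_nonneg (by positivity); apply div_nonneg (by nlinarith) hu.le
    linarith

theorem isBigO_adam_coord {α l c₀ δ : ℝ} {c x y : ℕ → ℝ}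
    (hx : ∀ n, x (n + 1) = α * x n + (1 - α) * (l * y n))
    (hy : ∀ n, y (n + 1) = y n - c n * x (n + 1)) (hc : Tendsto c atTop (𝓝 c₀))
    (hα : 0 < α) (htr : (1 + α - c₀ * (1 - α) * l) ^ 2 ≤ 4 * α) (hδ : 0 < δ) :
    (fun n => (x n, y n)) =O[atTop] fun n => (√α + δ) ^ n :=
  isBigO_of_succ_eq_of_tendsto (A := adamStep α l c₀) (B := fun n => adamStep α l (c n))
    (r := √α + δ / 2) (fun n => by simp [hx, hy, mul_assoc])
    (((continuous_adamStep α l).tendsto c₀).comp hc) (by positivity) (by linarith)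
    (isBigO_pow_of_mul_self_eq (adamStep_mul_self α l c₀) htr hα (by linarith))

theorem tendsto_adam_stepSize {α β γ ε : ℝ} {μ : ℕ → ℝ} (hα0 : 0 ≤ α) (hα1 : α < 1)
    (hβ0 : 0 ≤ β) (hβ1 : β < 1) (hε : ε ≠ 0) (hμ : Tendsto μ atTop (𝓝 0)) :
    Tendsto (fun n => γ * (1 - α ^ (n + 1))⁻¹ *
        (ε + (√(1 - β ^ (n + 1)))⁻¹ * √(μ (n + 1)))⁻¹) atTop (𝓝 (γ * ε⁻¹)) := by
  have hα := (tendsto_pow_atTop_nhds_zero_of_lt_one hα0 hα1).comp (tendsto_add_atTop_nat 1)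
  have hβ := (tendsto_pow_atTop_nhds_zero_of_lt_one hβ0 hβ1).comp (tendsto_add_atTop_nat 1)
  have hμ' := hμ.comp (tendsto_add_atTop_nat 1)
  have hbias : Tendsto (fun n => (1 - α ^ (n + 1))⁻¹) atTop (𝓝 1) := by
    simpa using (tendsto_const_nhds.sub hα).inv₀ (by norm_num : (1 : ℝ) - 0 ≠ 0)
  have hdenom : Tendsto (fun n => ε + (√(1 - β ^ (n + 1)))⁻¹ * √(μ (n + 1))) atTop (𝓝 ε) := by
    simpa using tendsto_const_nhds.add
      (((tendsto_const_nhds.sub hβ).sqrt.inv₀ (by norm_num : √((1 : ℝ) - 0) ≠ 0)).mul hμ'.sqrt)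
  simpa using (tendsto_const_nhds.mul hbias).mul (hdenom.inv₀ hε)

theorem sq_mul_inv_mul_le_one {γ ε q : ℝ} (hε : 0 < ε) (hq : 0 < q) (hγ0 : 0 ≤ γ)
    (hγ : γ ≤ ε / √q) : (γ * ε⁻¹) ^ 2 * q ≤ 1 := by
  have h : γ * √q ≤ ε := (le_div_iff₀ (Real.sqrt_pos.2 hq)).1 hγ
  calc (γ * ε⁻¹) ^ 2 * q = (γ * √q / ε) ^ 2 := by
        rw [div_pow, mul_pow, mul_pow, Real.sq_sqrt hq.le]; field_simp
    _ ≤ 1 := pow_le_one₀ (by positivity) ((div_le_one hε).2 h)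

theorem hasGradientAt_half_sum_mul_sq {ι : Type*} [Fintype ι] (lam : ι → ℝ)
    (θ : EuclideanSpace ℝ ι) :
    HasGradientAt (fun x : EuclideanSpace ℝ ι => 1 / 2 * ∑ i, lam i * x i ^ 2)
      (WithLp.toLp 2 fun i => lam i * θ i) θ := by
  rw [hasGradientAt_iff_hasFDerivAt]
  have h (i : ι) := (((EuclideanSpace.proj i : EuclideanSpace ℝ ι →L[ℝ] ℝ).hasFDerivAt
    (x := θ)).pow 2).const_mul (lam i)
  refine ((HasFDerivAt.fun_sum (u := Finset.univ) fun i _ => h i).const_mul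
    (1 / 2 : ℝ)).congr_fderiv ?_
  ext y
  simp [PiLp.inner_apply, Finset.mul_sum]
  exact Finset.sum_congr rfl fun i _ => by ring

theorem stmt12_general (d : ℕ) (lam : Fin d → ℝ) (hlam : ∀ i, 0 < lam i)
    (κ K : ℝ) (hκ : IsLeast (Set.range lam) κ) (hK : IsGreatest (Set.range lam) K)
    (L : EuclideanSpace ℝ (Fin d) → ℝ)
    (hL : ∀ θ : EuclideanSpace ℝ (Fin d), L θ = (1 / 2) * ∑ i, lam i * (θ i) ^ 2)
    (α β γ ε : ℝ) (hα0 : 0 < α) (hα1 : α < 1) (hβ0 : 0 < β) (hβ1 : β < 1)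
    (hγ : 0 < γ) (hε : 0 < ε)
    (hαval : α = ((1 - γ * ε⁻¹ * κ) / (1 + γ * ε⁻¹ * κ)) ^ 2)
    (hγ' : γ ≤ ε / Real.sqrt (κ * K))
    (Θ m M : ℕ → EuclideanSpace ℝ (Fin d))
    (hm : ∀ n : ℕ, m (n + 1) = α • m n + (1 - α) • gradient L (Θ n))
    (hΘ : ∀ n : ℕ, Θ (n + 1) = Θ n - (γ * (1 - α ^ (n + 1))⁻¹) •
      had (regInvSqrt ε ((Real.sqrt (1 - β ^ (n + 1)))⁻¹) (M (n + 1))) (m (n + 1)))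
    (hMlim : Tendsto (fun n => ‖M n‖) atTop (nhds 0))
    (δ : ℝ) (hδ : 0 < δ) :
    ∃ C : ℝ, 0 < C ∧ ∀ n : ℕ, ‖Θ n‖ ≤ C * (Real.sqrt α + δ) ^ n := by
  obtain ⟨⟨i₀, rfl⟩, hκle⟩ := hκ
  obtain ⟨-, hKge⟩ := hK
  have hgrad (θ : EuclideanSpace ℝ (Fin d)) :
      gradient L θ = WithLp.toLp 2 fun i => lam i * θ i := by
    rw [funext hL]; exact (hasGradientAt_half_sum_mul_sq lam θ).gradient
  have hstep : (γ * ε⁻¹) ^ 2 * (lam i₀ * K) ≤ 1 :=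
    sq_mul_inv_mul_le_one hε (mul_pos (hlam i₀) ((hlam i₀).trans_le (hKge ⟨i₀, rfl⟩))) hγ.le hγ'
  have hcoord (i : Fin d) : (fun n => Θ n i) =O[atTop] fun n => (√α + δ) ^ n := by
    refine isBigO_snd_prod.trans <| isBigO_adam_coord (l := lam i) (x := fun n => m n i)
      (fun n => ?_) (fun n => ?_) (tendsto_adam_stepSize (γ := γ) (μ := fun n => M n i)
        hα0.le hα1 hβ0.le hβ1 hε.ne' ?_) hα0 ?_ hδ
    · simp [hm, hgrad]
    · simp [hΘ, had, regInvSqrt]; ring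
    · exact squeeze_zero_norm (fun n => PiLp.norm_apply_le (M n) i) hMlim
    · refine sq_trace_adamStep_le (by positivity) (hlam i₀).le (hκle ⟨i, rfl⟩) ?_ hαval
      exact (mul_le_mul_of_nonneg_left (mul_le_mul_of_nonneg_left (hKge ⟨i, rfl⟩)
        (hlam i₀).le) (sq_nonneg _)).trans hstep
  have hΘ' : Θ =O[atTop] fun n => (√α + δ) ^ n :=
    ((EuclideanSpace.equiv (Fin d) ℝ).symm.toContinuousLinearMap.isBigO_comp _ _).trans
      (isBigO_pi.2 hcoord)
  obtain ⟨C, hC, hΘC⟩ := bound_of_isBigO_nat_atTop hΘ'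
  have hq : 0 < √α + δ := by positivity
  exact ⟨C, hC, fun n => by simpa [abs_of_pos hq] using hΘC (pow_ne_zero n hq.ne')⟩

/-- Convergence of Adam for quadratic objective functions. -/
theorem stmt12 (d : ℕ) (hd : 0 < d) (lam : Fin d → ℝ) (hlam : ∀ i, 0 < lam i)
    (κ K : ℝ) (hκ : IsLeast (Set.range lam) κ) (hK : IsGreatest (Set.range lam) K)
    (L : EuclideanSpace ℝ (Fin d) → ℝ)
    (hL : ∀ θ : EuclideanSpace ℝ (Fin d), L θ = (1 / 2) * ∑ i, lam i * (θ i) ^ 2)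
    (α β γ ε : ℝ) (hα0 : 0 < α) (hα1 : α < 1) (hβ0 : 0 < β) (hβ1 : β < 1)
    (hγ : 0 < γ) (hε : 0 < ε)
    (hαval : α = ((1 - γ * ε⁻¹ * κ) / (1 + γ * ε⁻¹ * κ)) ^ 2)
    (hγ' : γ ≤ ε / Real.sqrt (κ * K))
    (Θ m M : ℕ → EuclideanSpace ℝ (Fin d))
    (hm : ∀ n : ℕ, m (n + 1) = α • m n + (1 - α) • gradient L (Θ n))
    (hM : ∀ n : ℕ, M (n + 1) = β • M n + (1 - β) • sq2 (gradient L (Θ n)))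
    (hΘ : ∀ n : ℕ, Θ (n + 1) = Θ n - (γ * (1 - α ^ (n + 1))⁻¹) •
      had (regInvSqrt ε ((Real.sqrt (1 - β ^ (n + 1)))⁻¹) (M (n + 1))) (m (n + 1)))
    (hMlim : Tendsto (fun n => ‖M n‖) atTop (nhds 0))
    (δ : ℝ) (hδ : 0 < δ) :
    ∃ C : ℝ, 0 < C ∧ ∀ n : ℕ, ‖Θ n‖ ≤ C * (Real.sqrt α + δ) ^ n :=
  stmt12_general d lam hlam κ K hκ hK L hL α β γ ε hα0 hα1 hβ0 hβ1 hγ hε hαval hγ' Θ m M hm hΘ hMlim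
    δ hδ
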